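/- arXiv:1607.02611 — 6 statements merged into one kernel-verified Lean document; each statement's English description precedes it below -/
import Mathlib

section
/- If b > 0 and x : [t0, tmax) → ℝ is a C¹ function satisfying x'(t) > b·x(t)³ for all t, with x(t0) = x0 > 0, then for all t in [t0, tmax) with 1 - 2b·x0²·(t - t0) > 0, one has x(t) ≥ x0 / √(1 - 2b·x0²·(t - t0)). -/
theorem stmt_0 (b t0 tmax x0 : ℝ) (x x' : ℝ → ℝ)
    (hb : 0 < b)
    (hC1 : ∀ t ∈ Set.Ico t0 tmax, HasDerivAt x (x' t) t)
    (hcont : ContinuousOn x' (Set.Ico t0 tmax))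
    (hineq : ∀ t ∈ Set.Ico t0 tmax, x' t > b * (x t) ^ 3)
    (hx0 : x t0 = x0) (hx0pos : 0 < x0) :
    ∀ t ∈ Set.Ico t0 tmax, 0 < 1 - 2 * b * x0 ^ 2 * (t - t0) →
      x t ≥ x0 / Real.sqrt (1 - 2 * b * x0 ^ 2 * (t - t0)) := by
  intro t ht hpos
  obtain ⟨ht0, htmax⟩ := ht
  set c : ℝ := 2 * b * x0 ^ 2 with hc_def
  have hc : 0 < c := by positivity
  set u : ℝ → ℝ := fun s => 1 - c * (s - t0) with hu_def
  set y : ℝ → ℝ := fun s => x0 / Real.sqrt (u s) with hy_def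
  -- positivity of u on [t0, t]
  have hupos : ∀ s ∈ Set.Icc t0 t, 0 < u s := by
    intro s hs
    have : c * (s - t0) ≤ c * (t - t0) := by
      apply mul_le_mul_of_nonneg_left (by linarith [hs.2]) hc.le
    have := hpos
    simp only [hu_def]
    nlinarith
  -- derivative of y
  have hyderiv : ∀ s ∈ Set.Icc t0 t, HasDerivAt y (b * (y s) ^ 3) s := by
    intro s hs
    have hus : 0 < u s := hupos s hs
    have hsq : Real.sqrt (u s) ^ 2 = u s := Real.sq_sqrt hus.le
    have hsqpos : 0 < Real.sqrt (u s) := Real.sqrt_pos.mpr hus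
    have hu' : HasDerivAt u (-c) s := by
      simpa using (((hasDerivAt_id s).sub_const t0).const_mul c).const_sub 1
    have hsqrt : HasDerivAt (fun s => Real.sqrt (u s)) (1 / (2 * Real.sqrt (u s)) * (-c)) s :=
      (Real.hasDerivAt_sqrt hus.ne').comp s hu'
    have hdiv : HasDerivAt y
        ((0 * Real.sqrt (u s) - x0 * (1 / (2 * Real.sqrt (u s)) * (-c))) / (Real.sqrt (u s)) ^ 2)
        s := (hasDerivAt_const s x0).div hsqrt hsqpos.ne'
    convert hdiv using 1
    simp only [hy_def]
    rw [hc_def]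
    generalize Real.sqrt (u s) = r at hsqpos ⊢
    field_simp
    ring
  -- apply the comparison theorem on [t0, t]
  have hsub : Set.Icc t0 t ⊆ Set.Ico t0 tmax := fun s hs => ⟨hs.1, lt_of_le_of_lt hs.2 htmax⟩
  have key : ∀ ⦃s⦄, s ∈ Set.Icc t0 t → y s ≤ x s := by
    refine image_le_of_deriv_right_lt_deriv_boundary'
      (f := y) (f' := fun s => b * (y s) ^ 3) (B := x) (B' := x') ?_ ?_ ?_ ?_ ?_ ?_
    · exact fun s hs => ((hyderiv s hs).continuousAt).continuousWithinAt
    · intro s hs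
      exact (hyderiv s (Set.Ico_subset_Icc_self hs)).hasDerivWithinAt
    · simp [hy_def, hu_def, hx0]
    · exact fun s hs => ((hC1 s (hsub hs)).continuousAt).continuousWithinAt
    · intro s hs
      exact (hC1 s (hsub (Set.Ico_subset_Icc_self hs))).hasDerivWithinAt
    · intro s hs heq
      show b * y s ^ 3 < x' s
      rw [heq]
      exact hineq s (hsub (Set.Ico_subset_Icc_self hs))
  have := key (Set.right_mem_Icc.mpr ht0)
  simpa [hy_def, hu_def] using this
end

section
/- If b > 0 and x : [t0, tmax) → ℝ is a C¹ function satisfying x'(t) > b·x(t)³ with x(t0) = x0 > 0, and x is defined on all of [t0, tmax), then tmax - t0 ≤ 1/(2b·x0²). -/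
/-!
While `x` stays positive, `x' ≥ b x³` says that `t ↦ x(t)⁻² + 2bt` is nonincreasing.
Since `x' > 0` whenever `x = x(t₀) > 0`, `x` never drops below `x(t₀)`, so this holds on all
of `[t₀, tmax)`, and positivity of `x(t)⁻²` gives `2b(t - t₀) < x(t₀)⁻²` for every `t < tmax`.
-/

open Set

theorem le_of_hasDerivAt_pos_of_eq {f f' : ℝ → ℝ} {a b c : ℝ}
    (hf : ∀ t ∈ Ico a b, HasDerivAt f (f' t) t) (ha : c ≤ f a)
    (hpos : ∀ t ∈ Ico a b, f t = c → 0 < f' t) : ∀ t ∈ Ico a b, c ≤ f t := by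
  intro t ht
  have hsub : Icc a t ⊆ Ico a b := Icc_subset_Ico_right ht.2
  have hsub' : Ico a t ⊆ Ico a b := Ico_subset_Icc_self.trans hsub
  exact image_le_of_deriv_right_lt_deriv_boundary' (f' := fun _ => 0) continuousOn_const
    (fun _ _ => hasDerivWithinAt_const _ _ c) ha
    (fun s hs => (hf s (hsub hs)).continuousAt.continuousWithinAt)
    (fun s hs => (hf s (hsub' hs)).hasDerivWithinAt)
    (fun s hs hs' => hpos s (hsub' hs) hs'.symm) ⟨ht.1, le_rfl⟩

section CubicDifferentialInequality

variable {b t0 tmax : ℝ} {x x' : ℝ → ℝ}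

theorem initial_le_of_cube_le_deriv (hb : 0 < b) (hx : ∀ t ∈ Ico t0 tmax, HasDerivAt x (x' t) t)
    (hineq : ∀ t ∈ Ico t0 tmax, b * x t ^ 3 ≤ x' t) (hx0 : 0 < x t0) :
    ∀ t ∈ Ico t0 tmax, x t0 ≤ x t :=
  le_of_hasDerivAt_pos_of_eq hx le_rfl fun t ht hxt =>
    (by rw [hxt]; positivity : 0 < b * x t ^ 3).trans_le (hineq t ht)

theorem antitoneOn_inv_sq_add_of_cube_le_deriv (hx : ∀ t ∈ Ico t0 tmax, HasDerivAt x (x' t) t)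
    (hineq : ∀ t ∈ Ico t0 tmax, b * x t ^ 3 ≤ x' t) (hpos : ∀ t ∈ Ico t0 tmax, 0 < x t) :
    AntitoneOn (fun t => (x t ^ 2)⁻¹ + 2 * b * t) (Ico t0 tmax) := by
  have hderiv : ∀ t ∈ Ico t0 tmax, HasDerivAt (fun t => (x t ^ 2)⁻¹ + 2 * b * t)
      (-(2 * x t ^ 1 * x' t) / (x t ^ 2) ^ 2 + 2 * b) t := fun t ht =>
    (((hx t ht).fun_pow 2).inv (pow_pos (hpos t ht) 2).ne').add
      ((hasDerivAt_id t).const_mul (2 * b) |>.congr_deriv (mul_one _))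
  refine antitoneOn_of_hasDerivWithinAt_nonpos (convex_Ico t0 tmax)
    (fun t ht => (hderiv t ht).continuousAt.continuousWithinAt)
    (fun t ht => (hderiv t (interior_subset ht)).hasDerivWithinAt) fun t ht => ?_
  have ht : t ∈ Ico t0 tmax := interior_subset ht
  have hxt := hpos t ht
  have key : b * x t ^ 4 ≤ x t * x' t := by
    nlinarith [mul_le_mul_of_nonneg_left (hineq t ht) hxt.le]
  rw [neg_div, neg_add_nonpos_iff, le_div_iff₀ (by positivity)]
  nlinarith

theorem mul_sub_lt_inv_sq_of_cube_le_deriv (hb : 0 < b)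
    (hx : ∀ t ∈ Ico t0 tmax, HasDerivAt x (x' t) t)
    (hineq : ∀ t ∈ Ico t0 tmax, b * x t ^ 3 ≤ x' t) (hx0 : 0 < x t0) :
    ∀ t ∈ Ico t0 tmax, 2 * b * (t - t0) < (x t0 ^ 2)⁻¹ := by
  intro t ht
  have hpos (s : ℝ) (hs : s ∈ Ico t0 tmax) : 0 < x s :=
    hx0.trans_le (initial_le_of_cube_le_deriv hb hx hineq hx0 s hs)
  have hmono : (x t ^ 2)⁻¹ + 2 * b * t ≤ (x t0 ^ 2)⁻¹ + 2 * b * t0 :=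
    antitoneOn_inv_sq_add_of_cube_le_deriv hx hineq hpos ⟨le_rfl, ht.1.trans_lt ht.2⟩ ht ht.1
  have hinv : 0 < (x t ^ 2)⁻¹ := by have := hpos t ht; positivity
  linarith

end CubicDifferentialInequality

theorem stmt_1_general (b t0 tmax x0 : ℝ) (x x' : ℝ → ℝ)
    (hb : 0 < b)
    (hC1 : ∀ t ∈ Set.Ico t0 tmax, HasDerivAt x (x' t) t)
    (hineq : ∀ t ∈ Set.Ico t0 tmax, x' t > b * (x t) ^ 3)
    (hx0 : x t0 = x0) (hx0pos : 0 < x0) :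
    tmax - t0 ≤ 1 / (2 * b * x0 ^ 2) := by
  subst hx0
  have hbound := mul_sub_lt_inv_sq_of_cube_le_deriv hb hC1 (fun t ht => (hineq t ht).le) hx0pos
  by_contra! hlong
  have hc : 0 < 1 / (2 * b * x t0 ^ 2) := by positivity
  have hcontra := hbound (t0 + 1 / (2 * b * x t0 ^ 2)) ⟨by linarith, by linarith⟩
  field_simp at hcontra
  linarith

theorem stmt_1 (b t0 tmax x0 : ℝ) (x x' : ℝ → ℝ)
    (hb : 0 < b) (ht : t0 < tmax)
    (hC1 : ∀ t ∈ Set.Ico t0 tmax, HasDerivAt x (x' t) t)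
    (hcont : ContinuousOn x' (Set.Ico t0 tmax))
    (hineq : ∀ t ∈ Set.Ico t0 tmax, x' t > b * (x t) ^ 3)
    (hx0 : x t0 = x0) (hx0pos : 0 < x0) :
    tmax - t0 ≤ 1 / (2 * b * x0 ^ 2) :=
  stmt_1_general b t0 tmax x0 x x' hb hC1 hineq hx0 hx0pos
end

section
/- Suppose t1 > 0 and ε > 0 satisfy cos(κt) - |sin(κt)| > ε for all t ∈ [0, t1]. If z0 = (x0, y0) satisfies x0² ≥ y0² and x0² ≥ 1/(2ε·t1), then the solution z(t) of the planar system with z(0) = z0 blows up (|x(t)| → ∞) in time at most t1; i.e., the maximal forward existence time is strictly less than t1. -/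
/-!
Along a solution, `(x² - y²)' = 2(x² + y²)(1 + cos(κt)(x² + y²)) ≥ 0`, so the cone `x² ≥ y²` is
forward invariant. Inside the cone `|xy| ≤ x²`, hence
`(x²)' ≥ 2(cos(κt) - |sin(κt)|)(x² + y²)x² ≥ 2ε(x²)²`. For `v = x²` this Riccati inequality makes
`1/v + 2εt` nonincreasing, so `1/v(t₁) ≤ 1/v(0) - 2εt₁ ≤ 0`, which is impossible.
-/

open Set Real

lemma monotoneOn_of_forall_hasDerivAt_nonneg {D : Set ℝ} (hD : Convex ℝ D) {f f' : ℝ → ℝ}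
    (hf : ∀ t ∈ D, HasDerivAt f (f' t) t) (hf' : ∀ t ∈ D, 0 ≤ f' t) : MonotoneOn f D :=
  monotoneOn_of_hasDerivWithinAt_nonneg hD (fun t ht ↦ (hf t ht).continuousAt.continuousWithinAt)
    (fun t ht ↦ (hf t (interior_subset ht)).hasDerivWithinAt) fun t ht ↦ hf' t (interior_subset ht)

lemma mul_sub_lt_inv_of_hasDerivAt_ge_sq {v v' : ℝ → ℝ} {a t₀ t₁ : ℝ} (ha : 0 ≤ a)
    (ht : t₀ ≤ t₁) (hv : ∀ t ∈ Icc t₀ t₁, HasDerivAt v (v' t) t)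
    (hv' : ∀ t ∈ Icc t₀ t₁, a * v t ^ 2 ≤ v' t) (hv₀ : 0 < v t₀) :
    a * (t₁ - t₀) < (v t₀)⁻¹ := by
  have ht₀ : t₀ ∈ Icc t₀ t₁ := left_mem_Icc.2 ht
  have ht₁ : t₁ ∈ Icc t₀ t₁ := right_mem_Icc.2 ht
  have hpos : ∀ t ∈ Icc t₀ t₁, 0 < v t := fun t hmem ↦
    hv₀.trans_le <| monotoneOn_of_forall_hasDerivAt_nonneg (convex_Icc t₀ t₁) hv
      (fun s hs ↦ (by positivity : 0 ≤ a * v s ^ 2).trans (hv' s hs)) ht₀ hmem hmem.1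
  have hmono : MonotoneOn (fun t ↦ -(v t)⁻¹ - a * t) (Icc t₀ t₁) := by
    refine monotoneOn_of_forall_hasDerivAt_nonneg (convex_Icc t₀ t₁)
      (fun t hmem ↦ (((hv t hmem).inv (hpos t hmem).ne').neg).sub ((hasDerivAt_id t).const_mul a))
      fun t hmem ↦ ?_
    have hsq : 0 < v t ^ 2 := by have := hpos t hmem; positivity
    rw [mul_one, neg_div, neg_neg, sub_nonneg, le_div_iff₀ hsq]
    exact hv' t hmem
  have hend : -(v t₀)⁻¹ - a * t₀ ≤ -(v t₁)⁻¹ - a * t₁ := hmono ht₀ ht₁ ht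
  linarith [inv_pos.2 (hpos t₁ ht₁)]

/-- With `c = cos κt` and `s = sin κt`, `(fieldX c s a b, fieldY c s a b)` is the right-hand side
of the planar system at `z = (a, b)`. -/
def fieldX (c s a b : ℝ) : ℝ := a * (1 + c * (a ^ 2 + b ^ 2)) + s * (a ^ 2 + b ^ 2) * b

def fieldY (c s a b : ℝ) : ℝ := -b * (1 + c * (a ^ 2 + b ^ 2)) + s * (a ^ 2 + b ^ 2) * a

lemma two_mul_fieldX_sub_two_mul_fieldY (c s a b : ℝ) :
    2 * a * fieldX c s a b - 2 * b * fieldY c s a b =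
      2 * (a ^ 2 + b ^ 2) * (1 + c * (a ^ 2 + b ^ 2)) := by
  unfold fieldX fieldY; ring

lemma two_mul_sq_sq_le_two_mul_fieldX {c s a b ε : ℝ} (hε : 0 ≤ ε) (hcs : ε ≤ c - |s|)
    (hab : b ^ 2 ≤ a ^ 2) : 2 * ε * (a ^ 2) ^ 2 ≤ 2 * a * fieldX c s a b := by
  have hr : 0 ≤ a ^ 2 + b ^ 2 := by positivity
  have habs : |a * b| ≤ a ^ 2 := by
    calc |a * b| = |a| * |b| := abs_mul a b
      _ ≤ |a| * |a| := mul_le_mul_of_nonneg_left (sq_le_sq.1 hab) (abs_nonneg a)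
      _ = a ^ 2 := by rw [← sq, sq_abs]
  have hmix : -(|s| * a ^ 2) ≤ s * (a * b) := by
    refine neg_le_of_abs_le ((abs_mul s (a * b)).trans_le ?_)
    exact mul_le_mul_of_nonneg_left habs (abs_nonneg s)
  calc 2 * ε * (a ^ 2) ^ 2 ≤ 2 * ε * ((a ^ 2 + b ^ 2) * a ^ 2) := by gcongr; nlinarith
    _ ≤ 2 * (c - |s|) * ((a ^ 2 + b ^ 2) * a ^ 2) := by gcongr
    _ ≤ 2 * a * fieldX c s a b := by
      unfold fieldX
      nlinarith [mul_le_mul_of_nonneg_right hmix hr, sq_nonneg a]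

def IsPlanarSolutionOn (κ : ℝ) (x y : ℝ → ℝ) (D : Set ℝ) : Prop :=
  ∀ t ∈ D, HasDerivAt x (fieldX (cos (κ * t)) (sin (κ * t)) (x t) (y t)) t ∧
    HasDerivAt y (fieldY (cos (κ * t)) (sin (κ * t)) (x t) (y t)) t

namespace IsPlanarSolutionOn

variable {κ t₀ t₁ : ℝ} {x y : ℝ → ℝ}

lemma cone_invariant (h : IsPlanarSolutionOn κ x y (Icc t₀ t₁))
    (hc : ∀ t ∈ Icc t₀ t₁, 0 ≤ cos (κ * t)) (h₀ : y t₀ ^ 2 ≤ x t₀ ^ 2) :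
    ∀ t ∈ Icc t₀ t₁, y t ^ 2 ≤ x t ^ 2 := by
  have hmono : MonotoneOn (fun t ↦ x t ^ 2 - y t ^ 2) (Icc t₀ t₁) := by
    refine monotoneOn_of_forall_hasDerivAt_nonneg (convex_Icc t₀ t₁)
      (f' := fun t ↦ 2 * (x t ^ 2 + y t ^ 2) * (1 + cos (κ * t) * (x t ^ 2 + y t ^ 2)))
      (fun t ht ↦ (((h t ht).1.pow 2).sub ((h t ht).2.pow 2)).congr_deriv ?_) fun t ht ↦ ?_
    · rw [← two_mul_fieldX_sub_two_mul_fieldY]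
      push_cast
      ring
    · have := hc t ht
      positivity
  intro t ht
  have : x t₀ ^ 2 - y t₀ ^ 2 ≤ x t ^ 2 - y t ^ 2 :=
    hmono (left_mem_Icc.2 (ht.1.trans ht.2)) ht ht.1
  linarith

lemma mul_sub_lt_inv_sq (h : IsPlanarSolutionOn κ x y (Icc t₀ t₁)) {ε : ℝ} (hε : 0 ≤ ε)
    (ht : t₀ ≤ t₁) (hcs : ∀ t ∈ Icc t₀ t₁, ε ≤ cos (κ * t) - |sin (κ * t)|)
    (h₀ : y t₀ ^ 2 ≤ x t₀ ^ 2) (hx₀ : x t₀ ≠ 0) :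
    2 * ε * (t₁ - t₀) < (x t₀ ^ 2)⁻¹ := by
  have hc : ∀ t ∈ Icc t₀ t₁, 0 ≤ cos (κ * t) := fun t ht ↦
    hε.trans <| (hcs t ht).trans (sub_le_self _ (abs_nonneg _))
  refine mul_sub_lt_inv_of_hasDerivAt_ge_sq (by positivity) ht
    (fun t ht ↦ ((h t ht).1.pow 2).congr_deriv (by push_cast; ring))
    (fun t ht ↦ two_mul_sq_sq_le_two_mul_fieldX hε (hcs t ht) (h.cone_invariant hc h₀ t ht))
    (sq_pos_of_ne_zero hx₀)

end IsPlanarSolutionOn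

/-- If cos(κt) - |sin(κt)| > ε on [0, t1], z₀ lies in the cone Q⁺ and
x₀² ≥ 1/(2 ε t1), then there is no solution of the planar system on all of
[0, t1] with z(0) = z₀: the maximal forward existence time is < t1. -/
theorem stmt_4 (κ t1 ε x0 y0 : ℝ) (ht1 : 0 < t1) (hε : 0 < ε)
    (hcs : ∀ t ∈ Set.Icc (0 : ℝ) t1,
      Real.cos (κ * t) - |Real.sin (κ * t)| > ε)
    (hcone : x0 ^ 2 ≥ y0 ^ 2) (hbig : x0 ^ 2 ≥ 1 / (2 * ε * t1)) :
    ¬ ∃ x y : ℝ → ℝ, x 0 = x0 ∧ y 0 = y0 ∧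
      ∀ t ∈ Set.Icc (0 : ℝ) t1,
        HasDerivAt x
          (x t * (1 + Real.cos (κ * t) * ((x t) ^ 2 + (y t) ^ 2)) +
            Real.sin (κ * t) * ((x t) ^ 2 + (y t) ^ 2) * y t) t ∧
        HasDerivAt y
          (-(y t) * (1 + Real.cos (κ * t) * ((x t) ^ 2 + (y t) ^ 2)) +
            Real.sin (κ * t) * ((x t) ^ 2 + (y t) ^ 2) * x t) t := by
  rintro ⟨x, y, rfl, rfl, hsol⟩
  have hpos : 0 < 2 * ε * t1 := by positivity
  have hx₀ : x 0 ≠ 0 := by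
    rintro h
    rw [h, zero_pow two_ne_zero] at hbig
    exact (one_div_pos.2 hpos).not_ge hbig
  have hlt := IsPlanarSolutionOn.mul_sub_lt_inv_sq hsol hε.le ht1.le (fun t ht ↦ (hcs t ht).le)
    hcone hx₀
  rw [sub_zero] at hlt
  rw [ge_iff_le, one_div, inv_le_comm₀ hpos (by positivity)] at hbig
  exact hlt.not_ge hbig
end

section
/- Let R0 ≥ 1 and suppose r : [0, h] → ℝ is C¹, r(0) ≤ R0, r(t) ≥ 0, and r'(t) ≤ 2·r(t)³ whenever r(t) ≥ 1, where h = 1/(8R0²). Then r(t) ≤ √2·R0 for all t ∈ [0, h]. -/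
/-!
Where `r ≥ 1`, the inequality `r' ≤ 2 r³` says that `r⁻² + 4 t` is nondecreasing. If `r t > R0`,
let `t₀` be the last time before `t` at which `r = R0`; on `[t₀, t]` we have `r ≥ R0 ≥ 1`, so
`r(t)⁻² ≥ R0⁻² - 4 (t - t₀) ≥ R0⁻² - 4 h = (2 R0²)⁻¹`, i.e. `r t ≤ √2 R0`.
-/

open Set

theorem ContinuousOn.exists_last_eq_of_le_of_le {f : ℝ → ℝ} {a b c : ℝ} (hab : a ≤ b)
    (hf : ContinuousOn f (Icc a b)) (ha : f a ≤ c) (hb : c ≤ f b) :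
    ∃ t₀ ∈ Icc a b, f t₀ = c ∧ ∀ s ∈ Icc t₀ b, c ≤ f s := by
  set A := Icc a b ∩ f ⁻¹' {c}
  have hA_closed : IsClosed A := hf.preimage_isClosed_of_isClosed isClosed_Icc isClosed_singleton
  have hA_bdd : BddAbove A := bddAbove_Icc.mono inter_subset_left
  obtain ⟨t₁, ht₁, hft₁⟩ := intermediate_value_Icc hab hf ⟨ha, hb⟩
  have ht₀ : sSup A ∈ A := hA_closed.csSup_mem ⟨t₁, ht₁, hft₁⟩ hA_bdd
  refine ⟨sSup A, ht₀.1, ht₀.2, fun s hs => not_lt.1 fun hlt => ?_⟩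
  -- a later crossing of the level `c` in `[s, b]` would contradict the maximality of `sSup A`
  have hs_ne : s ≠ sSup A := fun h => by rw [h, ht₀.2] at hlt; exact lt_irrefl c hlt
  have hsb : Icc s b ⊆ Icc a b := Icc_subset_Icc (ht₀.1.1.trans hs.1) le_rfl
  obtain ⟨t₂, ht₂, hft₂⟩ := intermediate_value_Icc hs.2 (hf.mono hsb) ⟨hlt.le, hb⟩
  have : t₂ ≤ sSup A := le_csSup hA_bdd ⟨hsb ht₂, hft₂⟩
  exact hs_ne (le_antisymm (ht₂.1.trans this) hs.1)

theorem inv_sq_sub_le_of_deriv_le_mul_cube {f f' : ℝ → ℝ} {a b k : ℝ} (hab : a ≤ b)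
    (hf : ∀ s ∈ Icc a b, HasDerivAt f (f' s) s) (hpos : ∀ s ∈ Icc a b, 0 < f s)
    (hf' : ∀ s ∈ Ioo a b, f' s ≤ k * f s ^ 3) :
    (f a ^ 2)⁻¹ - 2 * k * (b - a) ≤ (f b ^ 2)⁻¹ := by
  have hderiv : ∀ s ∈ Icc a b,
      HasDerivAt (fun u => (f u ^ 2)⁻¹) (-(2 * f s * f' s) / (f s ^ 2) ^ 2) s := fun s hs => by
    simpa using ((hf s hs).fun_pow 2).fun_inv (pow_ne_zero 2 (hpos s hs).ne')
  have key := (convex_Icc a b).mul_sub_le_image_sub_of_le_deriv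
    (fun s hs => (hderiv s hs).continuousAt.continuousWithinAt)
    (fun s hs => (hderiv s (interior_subset hs)).differentiableAt.differentiableWithinAt)
    (C := -2 * k) (fun s hs => by
      rw [interior_Icc] at hs
      have hs' := Ioo_subset_Icc_self hs
      rw [(hderiv s hs').deriv, le_div_iff₀ (by have := hpos s hs'; positivity)]
      have := mul_le_mul_of_nonneg_left (hf' s hs) (hpos s hs').le
      nlinarith)
    a (left_mem_Icc.2 hab) b (right_mem_Icc.2 hab) hab
  linarith

theorem stmt_8_general (R0 h : ℝ) (r r' : ℝ → ℝ)
    (hR0 : 1 ≤ R0) (hh : h = 1 / (8 * R0 ^ 2))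
    (hC1 : ∀ t ∈ Set.Icc 0 h, HasDerivAt r (r' t) t)
    (hr0 : r 0 ≤ R0)
    (hineq : ∀ t ∈ Set.Icc 0 h, 1 ≤ r t → r' t ≤ 2 * (r t) ^ 3) :
    ∀ t ∈ Set.Icc 0 h, r t ≤ Real.sqrt 2 * R0 := by
  intro t ht
  have hR0_le : R0 ≤ Real.sqrt 2 * R0 :=
    le_mul_of_one_le_left (by linarith) (Real.one_le_sqrt.2 (by norm_num))
  rcases le_or_gt (r t) R0 with hrt | hrt
  · exact hrt.trans hR0_le
  have hsub : Icc 0 t ⊆ Icc 0 h := Icc_subset_Icc le_rfl ht.2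
  obtain ⟨t₀, ht₀, hrt₀, hge⟩ := ContinuousOn.exists_last_eq_of_le_of_le ht.1
    (fun s hs => (hC1 s (hsub hs)).continuousAt.continuousWithinAt) hr0 hrt.le
  have hsub₀ : Icc t₀ t ⊆ Icc 0 h := (Icc_subset_Icc ht₀.1 le_rfl).trans hsub
  have hinv := inv_sq_sub_le_of_deriv_le_mul_cube ht₀.2 (fun s hs => hC1 s (hsub₀ hs))
    (fun s hs => by linarith [hge s hs]) fun s hs =>
      hineq s (hsub₀ (Ioo_subset_Icc_self hs)) (hR0.trans (hge s (Ioo_subset_Icc_self hs)))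
  rw [hrt₀] at hinv
  have hsq : r t ^ 2 ≤ 2 * R0 ^ 2 := by
    have : (2 * R0 ^ 2)⁻¹ ≤ (r t ^ 2)⁻¹ := by
      calc (2 * R0 ^ 2)⁻¹ = (R0 ^ 2)⁻¹ - 2 * 2 * h := by rw [hh]; field_simp; ring
        _ ≤ (R0 ^ 2)⁻¹ - 2 * 2 * (t - t₀) := by linarith [ht.2, ht₀.1]
        _ ≤ (r t ^ 2)⁻¹ := hinv
    exact (inv_le_inv₀ (by positivity) (by nlinarith)).1 this
  calc r t ≤ Real.sqrt (2 * R0 ^ 2) := Real.le_sqrt_of_sq_le hsq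
    _ = Real.sqrt 2 * R0 := by rw [Real.sqrt_mul zero_le_two, Real.sqrt_sq (by linarith)]

theorem stmt_8 (R0 h : ℝ) (r r' : ℝ → ℝ)
    (hR0 : 1 ≤ R0) (hh : h = 1 / (8 * R0 ^ 2))
    (hC1 : ∀ t ∈ Set.Icc 0 h, HasDerivAt r (r' t) t)
    (hcont : ContinuousOn r' (Set.Icc 0 h))
    (hr0 : r 0 ≤ R0)
    (hpos : ∀ t ∈ Set.Icc 0 h, 0 ≤ r t)
    (hineq : ∀ t ∈ Set.Icc 0 h, 1 ≤ r t → r' t ≤ 2 * (r t) ^ 3) :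
    ∀ t ∈ Set.Icc 0 h, r t ≤ Real.sqrt 2 * R0 :=
  stmt_8_general R0 h r r' hR0 hh hC1 hr0 hineq
end

section
/- The operator norm of Dv1(z), where v1(x,y) = (x²+y²)(x, -y), equals exactly 3(x² + y²) for every z = (x, y) ∈ ℝ². -/
/-!
Writing `σ` for the reflection `(x, y) ↦ (x, -y)`, we have `v1 w = ‖w‖² • σ w`, so
`Dv1(z) w = ‖z‖² • σ w + 2⟪z, w⟫ • σ z`. As `σ` is an isometry, Cauchy–Schwarz bounds
`‖Dv1(z) w‖` by `3‖z‖²‖w‖`, and `w = z` attains the bound since `Dv1(z) z = 3‖z‖² • σ z`.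
-/

open InnerProductSpace

section

variable {E F : Type*} [NormedAddCommGroup E] [InnerProductSpace ℝ E]
  [NormedAddCommGroup F] [NormedSpace ℝ F] (σ : E →ₗᵢ[ℝ] F) (z : E)

noncomputable def normSqSMulDeriv : E →L[ℝ] F :=
  ‖z‖ ^ 2 • σ.toContinuousLinearMap + (2 • innerSL ℝ z).smulRight (σ z)

theorem hasFDerivAt_norm_sq_smul :
    HasFDerivAt (fun w ↦ ‖w‖ ^ 2 • σ w) (normSqSMulDeriv σ z) z :=
  (hasFDerivAt_id z).norm_sq.fun_smul σ.toContinuousLinearMap.hasFDerivAt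

theorem normSqSMulDeriv_apply (w : E) :
    normSqSMulDeriv σ z w = ‖z‖ ^ 2 • σ w + (2 * ⟪z, w⟫_ℝ) • σ z := by
  simp [normSqSMulDeriv]

theorem norm_normSqSMulDeriv_apply_le (w : E) :
    ‖normSqSMulDeriv σ z w‖ ≤ 3 * ‖z‖ ^ 2 * ‖w‖ := by
  rw [normSqSMulDeriv_apply]
  calc _ ≤ ‖z‖ ^ 2 * ‖w‖ + 2 * |⟪z, w⟫_ℝ| * ‖z‖ := by
        refine (norm_add_le _ _).trans_eq ?_
        simp [norm_smul]
    _ ≤ ‖z‖ ^ 2 * ‖w‖ + 2 * (‖z‖ * ‖w‖) * ‖z‖ := by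
        gcongr; exact abs_real_inner_le_norm z w
    _ = 3 * ‖z‖ ^ 2 * ‖w‖ := by ring

theorem normSqSMulDeriv_apply_self :
    normSqSMulDeriv σ z z = (3 * ‖z‖ ^ 2) • σ z := by
  rw [normSqSMulDeriv_apply, real_inner_self_eq_norm_sq, ← add_smul]; congr 1; ring

theorem norm_normSqSMulDeriv : ‖normSqSMulDeriv σ z‖ = 3 * ‖z‖ ^ 2 := by
  refine le_antisymm (ContinuousLinearMap.opNorm_le_bound _ (by positivity)
    (norm_normSqSMulDeriv_apply_le σ z)) ?_
  calc 3 * ‖z‖ ^ 2 = ‖normSqSMulDeriv σ z z‖ / ‖z‖ := by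
        rcases eq_or_ne z 0 with rfl | hz
        · simp
        · rw [normSqSMulDeriv_apply_self, norm_smul, σ.norm_map]; field_simp; simp
    _ ≤ _ := ContinuousLinearMap.ratio_le_opNorm _ _

theorem norm_fderiv_norm_sq_smul : ‖fderiv ℝ (fun w ↦ ‖w‖ ^ 2 • σ w) z‖ = 3 * ‖z‖ ^ 2 := by
  rw [(hasFDerivAt_norm_sq_smul σ z).fderiv, norm_normSqSMulDeriv]

end

theorem reflection_span_single_zero_apply (w : EuclideanSpace ℝ (Fin 2)) :
    (ℝ ∙ EuclideanSpace.single 0 1).reflection w = WithLp.toLp 2 ![w 0, -w 1] := by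
  ext i
  fin_cases i
  · simp [Submodule.reflection_singleton_apply, EuclideanSpace.inner_single_left]; ring
  · simp [Submodule.reflection_singleton_apply, EuclideanSpace.inner_single_left]

theorem stmt_11
    (v1 : EuclideanSpace ℝ (Fin 2) → EuclideanSpace ℝ (Fin 2))
    (hv1 : v1 = fun (z : EuclideanSpace ℝ (Fin 2)) => WithLp.toLp 2 ![(z 0 ^ 2 + z 1 ^ 2) * z 0, -((z 0 ^ 2 + z 1 ^ 2) * z 1)])
    (z : EuclideanSpace ℝ (Fin 2)) :
    ‖fderiv ℝ v1 z‖ = 3 * (z 0 ^ 2 + z 1 ^ 2) := by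
  have norm_sq_eq (w : EuclideanSpace ℝ (Fin 2)) : ‖w‖ ^ 2 = w 0 ^ 2 + w 1 ^ 2 := by
    simp [EuclideanSpace.norm_sq_eq, Fin.sum_univ_two]
  have hv1_eq : v1 = fun w ↦ ‖w‖ ^ 2 •
      (ℝ ∙ EuclideanSpace.single 0 1).reflection.toLinearIsometry w := by
    subst hv1
    funext w
    ext i
    fin_cases i <;> simp [reflection_span_single_zero_apply, norm_sq_eq]
  rw [hv1_eq, norm_fderiv_norm_sq_smul, norm_sq_eq]
end

section
/- Let δ ∈ (0, π/4) and κ > 0. If |z0|² ≥ κ/(√2·(π/4 - δ)·sin δ), then the solution of the planar system z' = z̄(1 + |z|² e^{iκt}) with z(0) = z0 blows up in finite time either forwards or backwards in time: either |x(t)| → ∞ forward in finite time or |y(t)| → ∞ backward in finite time. -/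
/-!
In the cone `y² ≤ x²`, while `cos (κ t) ≥ 0`, the quantity `x² - y²` is nondecreasing, so the
cone is invariant. On `0 ≤ κ t ≤ π/4 - δ` one moreover has `cos (κ t) - sin (κ t) ≥ √2 sin δ`,
which gives the Riccati inequality `(x²)' ≥ 2√2 sin δ (x²)²`; its solutions blow up before
time `(π/4 - δ)/κ` once `x(0)²` exceeds the bound. If the data lie in the other cone, the map
`(x, y)(t) ↦ (y, x)(-t)` sends solutions to solutions and the same argument runs backwards.
-/

open Real Set

section DerivSign

variable {f f' : ℝ → ℝ} {a b : ℝ}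

theorem monotoneOn_Icc_of_hasDerivAt_nonneg (hf : ∀ t ∈ Icc a b, HasDerivAt f (f' t) t)
    (hf' : ∀ t ∈ Ioo a b, 0 ≤ f' t) : MonotoneOn f (Icc a b) := by
  refine monotoneOn_of_hasDerivWithinAt_nonneg (f' := f') (convex_Icc a b)
    (fun t ht => (hf t ht).continuousAt.continuousWithinAt) ?_ ?_ <;> rw [interior_Icc]
  · exact fun t ht => (hf t (Ioo_subset_Icc_self ht)).hasDerivWithinAt
  · exact hf'

theorem antitoneOn_Icc_of_hasDerivAt_nonpos (hf : ∀ t ∈ Icc a b, HasDerivAt f (f' t) t)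
    (hf' : ∀ t ∈ Ioo a b, f' t ≤ 0) : AntitoneOn f (Icc a b) := by
  have := monotoneOn_Icc_of_hasDerivAt_nonneg (f := -f) (fun t ht => (hf t ht).neg)
    (fun t ht => neg_nonneg.mpr (hf' t ht))
  exact fun s hs t ht hst => neg_le_neg_iff.mp (this hs ht hst)

theorem HasDerivAt.fun_sq {t c : ℝ} (hf : HasDerivAt f c t) :
    HasDerivAt (fun s => f s ^ 2) (2 * f t * c) t := by
  simpa using hf.fun_pow 2

end DerivSign

theorem false_of_riccati {a L : ℝ} {v v' : ℝ → ℝ} (hL : 0 ≤ L)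
    (hv : ∀ t ∈ Icc 0 L, HasDerivAt v (v' t) t) (hv' : ∀ t ∈ Ioo 0 L, a * v t ^ 2 ≤ v' t)
    (hv0 : 0 < v 0) (hlarge : 1 ≤ a * v 0 * L) : False := by
  have ha : 0 < a := by
    by_contra! ha
    nlinarith [mul_nonneg (mul_nonneg (neg_nonneg.mpr ha) hv0.le) hL]
  have hmono : MonotoneOn v (Icc 0 L) := monotoneOn_Icc_of_hasDerivAt_nonneg hv
    fun t ht => (by positivity : 0 ≤ a * v t ^ 2).trans (hv' t ht)
  have hpos : ∀ t ∈ Icc 0 L, 0 < v t := fun t ht =>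
    hv0.trans_le (hmono (left_mem_Icc.mpr hL) ht ht.1)
  -- `1 / v + a t` is nonincreasing, while `1 / v` must stay positive.
  have hanti : AntitoneOn (fun t => (v t)⁻¹ + a * t) (Icc 0 L) :=
    antitoneOn_Icc_of_hasDerivAt_nonpos
      (fun t ht => ((hv t ht).inv (hpos t ht).ne').add ((hasDerivAt_id t).const_mul a))
      fun t ht => by
        have hvt := hpos t (Ioo_subset_Icc_self ht)
        have : a ≤ v' t / v t ^ 2 := (le_div_iff₀ (by positivity)).mpr (hv' t ht)
        rw [neg_div]
        linarith
  have hdecr := hanti (left_mem_Icc.mpr hL) (right_mem_Icc.mpr hL) hL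
  have hinv0 : (v 0)⁻¹ ≤ a * L := by
    rw [inv_le_iff_one_le_mul₀ hv0]
    linarith
  have hvL := inv_pos.mpr (hpos L (right_mem_Icc.mpr hL))
  simp only [mul_zero, add_zero] at hdecr
  linarith

theorem sqrt_two_mul_sin_le_cos_sub_sin {δ θ : ℝ} (hθ : 0 ≤ θ) (hδ : 0 ≤ δ)
    (hθδ : θ + δ ≤ π / 4) : √2 * sin δ ≤ cos θ - sin θ := by
  have hrot : cos θ - sin θ = √2 * cos (θ + π / 4) := by
    rw [cos_add, cos_pi_div_four, sin_pi_div_four]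
    linear_combination (-(cos θ - sin θ) / 2) * mul_self_sqrt (show (0 : ℝ) ≤ 2 by norm_num)
  rw [hrot, ← cos_pi_div_two_sub]
  gcongr
  exact cos_le_cos_of_nonneg_of_le_pi (by positivity) (by linarith [pi_pos]) (by linarith)

theorem two_mul_mul_sq_sq_le_of_sq_le_sq {m c s x y : ℝ} (hm : 0 ≤ m) (hs : 0 ≤ s)
    (hcs : m ≤ c - s) (hxy : y ^ 2 ≤ x ^ 2) :
    2 * m * (x ^ 2) ^ 2 ≤ 2 * x * (x * (1 + c * (x ^ 2 + y ^ 2)) + s * (x ^ 2 + y ^ 2) * y) := by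
  have hr : 0 ≤ x ^ 2 + y ^ 2 := by positivity
  have hxy' : 0 ≤ x * y + x ^ 2 := by nlinarith [sq_nonneg (x + y)]
  have h1 : 0 ≤ s * (x ^ 2 + y ^ 2) * (x * y + x ^ 2) := by positivity
  have h2 : 0 ≤ (c - s - m) * ((x ^ 2 + y ^ 2) * x ^ 2) :=
    mul_nonneg (by linarith) (by positivity)
  have h3 : 0 ≤ m * (y ^ 2 * x ^ 2) := by positivity
  nlinarith [sq_nonneg x]

/-- The system `z' = z̄ (1 + |z|² e^{iκt})` written in the coordinates `z = x + i y`. -/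
def IsSolutionOn (κ : ℝ) (x y : ℝ → ℝ) (s : Set ℝ) : Prop :=
  ∀ t ∈ s,
    HasDerivAt x
      (x t * (1 + cos (κ * t) * ((x t) ^ 2 + (y t) ^ 2)) +
        sin (κ * t) * ((x t) ^ 2 + (y t) ^ 2) * y t) t ∧
    HasDerivAt y
      (-(y t) * (1 + cos (κ * t) * ((x t) ^ 2 + (y t) ^ 2)) +
        sin (κ * t) * ((x t) ^ 2 + (y t) ^ 2) * x t) t

namespace IsSolutionOn

variable {κ : ℝ} {x y : ℝ → ℝ} {s : Set ℝ}

theorem mono {s' : Set ℝ} (h : IsSolutionOn κ x y s) (hs : s' ⊆ s) : IsSolutionOn κ x y s' :=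
  fun t ht => h t (hs ht)

theorem reflect (h : IsSolutionOn κ x y s) :
    IsSolutionOn κ (fun t => y (-t)) (fun t => x (-t)) (Neg.neg ⁻¹' s) := by
  intro t ht
  obtain ⟨hx, hy⟩ := h (-t) ht
  constructor
  · refine (hy.comp t (hasDerivAt_neg t)).congr_deriv ?_
    simp only [mul_neg, cos_neg, sin_neg]
    ring
  · refine (hx.comp t (hasDerivAt_neg t)).congr_deriv ?_
    simp only [mul_neg, cos_neg, sin_neg]
    ring

theorem monotoneOn_sq_sub_sq {L : ℝ} (h : IsSolutionOn κ x y (Icc 0 L))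
    (hcos : ∀ t ∈ Ioo 0 L, 0 ≤ cos (κ * t)) :
    MonotoneOn (fun t => x t ^ 2 - y t ^ 2) (Icc 0 L) := by
  refine monotoneOn_Icc_of_hasDerivAt_nonneg
    (fun t ht => (h t ht).1.fun_sq.sub (h t ht).2.fun_sq) fun t ht => ?_
  have hr : 0 ≤ x t ^ 2 + y t ^ 2 := by positivity
  have hcr : 0 ≤ cos (κ * t) * (x t ^ 2 + y t ^ 2) := mul_nonneg (hcos t ht) hr
  calc (0 : ℝ) ≤ 2 * (x t ^ 2 + y t ^ 2) * (1 + cos (κ * t) * (x t ^ 2 + y t ^ 2)) := by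
        positivity
    _ = _ := by ring

end IsSolutionOn

theorem not_isSolutionOn_Icc_of_sq_le_sq {δ κ : ℝ} {x y : ℝ → ℝ} (hδ : δ ∈ Ioo 0 (π / 4))
    (hκ : 0 < κ) (hx0 : κ / (2 * √2 * (π / 4 - δ) * sin δ) ≤ x 0 ^ 2)
    (hcone : y 0 ^ 2 ≤ x 0 ^ 2) : ¬ IsSolutionOn κ x y (Icc 0 ((π / 4 - δ) / κ)) := by
  intro h
  obtain ⟨hδ0, hδ1⟩ := hδ
  set L := (π / 4 - δ) / κ with hL_def
  have hL : 0 ≤ L := div_nonneg (by linarith) hκ.le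
  have hsinδ : 0 < sin δ := sin_pos_of_pos_of_lt_pi hδ0 (by linarith [pi_pos])
  have hangle : ∀ t ∈ Icc 0 L, 0 ≤ κ * t ∧ κ * t + δ ≤ π / 4 := fun t ht =>
    ⟨mul_nonneg hκ.le ht.1, by linarith [(le_div_iff₀' hκ).mp ht.2]⟩
  have hsin : ∀ t ∈ Icc 0 L, 0 ≤ sin (κ * t) := fun t ht =>
    sin_nonneg_of_nonneg_of_le_pi (hangle t ht).1 (by linarith [pi_pos, hangle t ht])
  have hgap : ∀ t ∈ Icc 0 L, √2 * sin δ ≤ cos (κ * t) - sin (κ * t) := fun t ht =>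
    sqrt_two_mul_sin_le_cos_sub_sin (hangle t ht).1 hδ0.le (hangle t ht).2
  have hcone_t : ∀ t ∈ Icc 0 L, y t ^ 2 ≤ x t ^ 2 := by
    have hmono := h.monotoneOn_sq_sub_sq fun t ht => by
      have := hgap t (Ioo_subset_Icc_self ht)
      have := hsin t (Ioo_subset_Icc_self ht)
      have : 0 ≤ √2 * sin δ := by positivity
      linarith
    intro t ht
    have := hmono (left_mem_Icc.mpr hL) ht ht.1
    dsimp only at this
    linarith
  refine false_of_riccati (a := 2 * √2 * sin δ) hL (fun t ht => (h t ht).1.fun_sq)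
    (fun t ht => ?_) ?_ ?_
  · have ht := Ioo_subset_Icc_self ht
    simpa only [mul_assoc] using two_mul_mul_sq_sq_le_of_sq_le_sq (by positivity) (hsin t ht)
      (hgap t ht) (hcone_t t ht)
  · exact (by positivity : 0 < κ / (2 * √2 * (π / 4 - δ) * sin δ)).trans_le hx0
  · have hden : 0 < 2 * √2 * (π / 4 - δ) * sin δ := by
      have : 0 < π / 4 - δ := by linarith
      positivity
    rw [hL_def, show 2 * √2 * sin δ * x 0 ^ 2 * ((π / 4 - δ) / κ)
      = x 0 ^ 2 * (2 * √2 * (π / 4 - δ) * sin δ) / κ by ring, one_le_div hκ]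
    exact (div_le_iff₀ hden).mp hx0

/-- For large initial data the solution of the planar system blows up in finite
time forwards or backwards: there is a finite T such that no solution with the
given initial condition exists on all of [-T, T]. -/
theorem stmt_17 (δ κ x0 y0 : ℝ) (hδ : δ ∈ Set.Ioo 0 (Real.pi / 4)) (hκ : 0 < κ)
    (hbig : x0 ^ 2 + y0 ^ 2 ≥ κ / (Real.sqrt 2 * (Real.pi / 4 - δ) * Real.sin δ)) :
    ∃ T > (0 : ℝ), ¬ ∃ x y : ℝ → ℝ, x 0 = x0 ∧ y 0 = y0 ∧
      ∀ t ∈ Set.Icc (-T) T,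
        HasDerivAt x
          (x t * (1 + Real.cos (κ * t) * ((x t) ^ 2 + (y t) ^ 2)) +
            Real.sin (κ * t) * ((x t) ^ 2 + (y t) ^ 2) * y t) t ∧
        HasDerivAt y
          (-(y t) * (1 + Real.cos (κ * t) * ((x t) ^ 2 + (y t) ^ 2)) +
            Real.sin (κ * t) * ((x t) ^ 2 + (y t) ^ 2) * x t) t := by
  set T := (π / 4 - δ) / κ
  have hT : 0 < T := div_pos (by linarith [hδ.2]) hκ
  refine ⟨T, hT, ?_⟩
  rintro ⟨x, y, rfl, rfl, hode⟩
  have hsol : IsSolutionOn κ x y (Icc (-T) T) := hode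
  have hhalf : κ / (2 * √2 * (π / 4 - δ) * sin δ)
      = κ / (√2 * (π / 4 - δ) * sin δ) / 2 := by
    rw [div_div]; ring_nf
  rcases le_total (y 0 ^ 2) (x 0 ^ 2) with hcone | hcone
  · exact not_isSolutionOn_Icc_of_sq_le_sq hδ hκ (by linarith) hcone
      (hsol.mono (Icc_subset_Icc (by linarith) le_rfl))
  · exact not_isSolutionOn_Icc_of_sq_le_sq (x := fun t => y (-t)) (y := fun t => x (-t)) hδ hκ
      (by simp only [neg_zero]; linarith) (by simpa only [neg_zero] using hcone)
      (hsol.reflect.mono fun t ht => ⟨by linarith [ht.2], by linarith [ht.1]⟩)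
end
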